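/- Let q : V → ℝ, R : V × V → ℝ, and θ : V × V → ℝ. Suppose for every t ∈ V the invariant π_s(t) = α·q(t) + Σ_{(u,v)∈V×V} R(u,v)·π_v(t) holds, and suppose 0 ≤ R(u,v) ≤ θ(u,v) for every pair (u,v) ∈ V × V. Then Σ_{t∈V} |π_s(t) − α·q(t)| ≤ Σ_{(u,v)∈V×V} θ(u,v); that is, the vector α·q approximates π_s within ℓ1-error Σ_{(u,v)} θ(u,v). -/

import Mathlib

/-!
The transition matrix `P` is column-stochastic, hence so is every power `P^ℓ`, and each
`π_x` is a probability vector (the weights `α(1-α)^ℓ` sum to one). By the invariant,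
`π_s - α q = Σ R(u,v) π_v` is a nonnegative combination of probability vectors, so its
ℓ1-norm is `Σ R(u,v) ≤ Σ θ(u,v)`.
-/

open Finset

/-- Weighted degree of a node. -/
noncomputable def deg {V : Type*} [Fintype V] (A : V → V → ℝ) (u : V) : ℝ := ∑ v, A u v

/-- Transition matrix `P t v = A t v / d v` (column-stochastic). -/
noncomputable def transP {V : Type*} [Fintype V] (A : V → V → ℝ) : Matrix V V ℝ :=
  Matrix.of fun t v => A t v / deg A v

/-- Single-source personalized PageRank: `π_x = Σ_{ℓ≥0} α(1-α)^ℓ P^ℓ e_x`. -/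
noncomputable def ppr {V : Type*} [Fintype V] [DecidableEq V]
    (A : V → V → ℝ) (α : ℝ) (x t : V) : ℝ :=
  ∑' ℓ : ℕ, α * (1 - α) ^ ℓ * ((transP A ^ ℓ).mulVec (Pi.single x 1)) t

open Matrix

section
variable {V : Type*} [Fintype V] [DecidableEq V]

theorem transP_mem_colStochastic {A : V → V → ℝ} (hsymm : ∀ u v, A u v = A v u)
    (hnonneg : ∀ u v, 0 ≤ A u v) (hdeg : ∀ u, 0 < deg A u) :
    transP A ∈ colStochastic ℝ V := by
  refine mem_colStochastic_iff_sum.2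
    ⟨fun t v => div_nonneg (hnonneg t v) (hdeg v).le, fun v => ?_⟩
  have hcol : ∑ t, A t v = deg A v := sum_congr rfl fun t _ => hsymm t v
  simp only [transP, of_apply, ← sum_div, hcol, div_self (hdeg v).ne']

variable {M : Matrix V V ℝ} {α : ℝ}

theorem geometric_mul_pow_apply_nonneg (hM : M ∈ colStochastic ℝ V) (hα₀ : 0 ≤ α)
    (hα₁ : α ≤ 1) (t x : V) (ℓ : ℕ) : 0 ≤ α * (1 - α) ^ ℓ * (M ^ ℓ) t x :=
  mul_nonneg (mul_nonneg hα₀ (pow_nonneg (sub_nonneg.2 hα₁) ℓ))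
    (nonneg_of_mem_colStochastic (pow_mem hM ℓ))

theorem summable_geometric_mul_pow_apply (hM : M ∈ colStochastic ℝ V) (hα₀ : 0 < α)
    (hα₁ : α ≤ 1) (t x : V) : Summable fun ℓ : ℕ => α * (1 - α) ^ ℓ * (M ^ ℓ) t x := by
  refine .of_nonneg_of_le (geometric_mul_pow_apply_nonneg hM hα₀.le hα₁ t x) (fun ℓ => ?_)
    ((summable_geometric_of_lt_one (sub_nonneg.2 hα₁) (by linarith)).mul_left α)
  exact mul_le_of_le_one_right (mul_nonneg hα₀.le (pow_nonneg (sub_nonneg.2 hα₁) ℓ))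
    (le_one_of_mem_colStochastic (pow_mem hM ℓ))

theorem sum_tsum_geometric_mul_pow_apply (hM : M ∈ colStochastic ℝ V) (hα₀ : 0 < α)
    (hα₁ : α ≤ 1) (x : V) : ∑ t, ∑' ℓ : ℕ, α * (1 - α) ^ ℓ * (M ^ ℓ) t x = 1 := by
  have hcol (ℓ : ℕ) : ∑ t, α * (1 - α) ^ ℓ * (M ^ ℓ) t x = α * (1 - α) ^ ℓ := by
    rw [← mul_sum, sum_col_of_mem_colStochastic (pow_mem hM ℓ), mul_one]
  rw [← Summable.tsum_finsetSum fun t _ => summable_geometric_mul_pow_apply hM hα₀ hα₁ t x,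
    tsum_congr hcol, tsum_mul_left, tsum_geometric_of_lt_one (sub_nonneg.2 hα₁) (by linarith),
    sub_sub_cancel, mul_inv_cancel₀ hα₀.ne']

theorem ppr_eq_tsum (A : V → V → ℝ) (α : ℝ) (x t : V) :
    ppr A α x t = ∑' ℓ : ℕ, α * (1 - α) ^ ℓ * (transP A ^ ℓ) t x := by
  simp only [ppr, mulVec_single_one, col_apply]

theorem ppr_nonneg {A : V → V → ℝ} (hP : transP A ∈ colStochastic ℝ V) (hα₀ : 0 ≤ α)
    (hα₁ : α ≤ 1) (x t : V) : 0 ≤ ppr A α x t := by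
  rw [ppr_eq_tsum]
  exact tsum_nonneg (geometric_mul_pow_apply_nonneg hP hα₀ hα₁ t x)

theorem sum_ppr_eq_one {A : V → V → ℝ} (hP : transP A ∈ colStochastic ℝ V) (hα₀ : 0 < α)
    (hα₁ : α ≤ 1) (x : V) : ∑ t, ppr A α x t = 1 := by
  simp only [ppr_eq_tsum]
  exact sum_tsum_geometric_mul_pow_apply hP hα₀ hα₁ x

end

theorem edgepush_l1_error_general
    {V : Type*} [Fintype V] [DecidableEq V]
    (A : V → V → ℝ)
    (hsymm : ∀ u v : V, A u v = A v u)
    (hnonneg : ∀ u v : V, 0 ≤ A u v)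
    (hdeg : ∀ u : V, 0 < deg A u)
    (α : ℝ) (hα : α ∈ Set.Ioo (0 : ℝ) 1)
    (s : V)
    (q : V → ℝ) (R θ : V → V → ℝ)
    (hinv : ∀ t : V,
      ppr A α s t = α * q t + ∑ p : V × V, R p.1 p.2 * ppr A α p.2 t)
    (hRnonneg : ∀ u v : V, 0 ≤ R u v)
    (hRθ : ∀ u v : V, R u v ≤ θ u v) :
    ∑ t, |ppr A α s t - α * q t| ≤ ∑ p : V × V, θ p.1 p.2 := by
  have hP := transP_mem_colStochastic hsymm hnonneg hdeg
  have hres (t : V) : |ppr A α s t - α * q t| = ∑ p : V × V, R p.1 p.2 * ppr A α p.2 t := by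
    rw [hinv t, add_sub_cancel_left, abs_of_nonneg]
    exact sum_nonneg fun p _ =>
      mul_nonneg (hRnonneg p.1 p.2) (ppr_nonneg hP hα.1.le hα.2.le p.2 t)
  calc ∑ t, |ppr A α s t - α * q t|
      = ∑ p : V × V, R p.1 p.2 * ∑ t, ppr A α p.2 t := by
        simp only [hres, mul_sum]
        exact sum_comm
    _ = ∑ p : V × V, R p.1 p.2 := by simp only [sum_ppr_eq_one hP hα.1 hα.2.le, mul_one]
    _ ≤ ∑ p : V × V, θ p.1 p.2 := sum_le_sum fun p _ => hRθ p.1 p.2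

/-- **ℓ1-error of EdgePush (Lemma 5.2)**: if the EdgePush invariant holds and every
edge residue satisfies `0 ≤ R(u,v) ≤ θ(u,v)`, then `α·q` approximates `π_s`
within ℓ1-error `Σ_{(u,v)} θ(u,v)`. -/
theorem edgepush_l1_error
    {V : Type*} [Fintype V] [DecidableEq V] [Nonempty V]
    (A : V → V → ℝ)
    (hsymm : ∀ u v : V, A u v = A v u)
    (hnonneg : ∀ u v : V, 0 ≤ A u v)
    (hdeg : ∀ u : V, 0 < deg A u)
    (α : ℝ) (hα : α ∈ Set.Ioo (0 : ℝ) 1)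
    (s : V)
    (q : V → ℝ) (R θ : V → V → ℝ)
    (hinv : ∀ t : V,
      ppr A α s t = α * q t + ∑ p : V × V, R p.1 p.2 * ppr A α p.2 t)
    (hRnonneg : ∀ u v : V, 0 ≤ R u v)
    (hRθ : ∀ u v : V, R u v ≤ θ u v) :
    ∑ t, |ppr A α s t - α * q t| ≤ ∑ p : V × V, θ p.1 p.2 :=
  edgepush_l1_error_general A hsymm hnonneg hdeg α hα s q R θ hinv hRnonneg hRθ
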